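/- If −2√(g h_l) < v_l ≤ −√(g h_l), then the point h⁻ := (v_l + 2√(g h_l))²/g satisfies 0 < h⁻ ≤ h_l and the rarefaction part of the Lax curve meets the lower critical curve there: φ_l(h⁻) = v_l + 2√(g h_l) − 2√(g h⁻) = −√(g h⁻). -/

import Mathlib

/-- Lax curve through the left state `(hl, vl)`. -/
noncomputable def phil (g hl vl h : ℝ) : ℝ :=
  if h ≤ hl then vl + 2 * Real.sqrt (g * hl) - 2 * Real.sqrt (g * h)
  else vl - (h - hl) * Real.sqrt (g * (h + hl) / (2 * h * hl))

/-- Discharge-form Lax curve through the left state. -/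
noncomputable def philTilde (g hl vl h : ℝ) : ℝ := h * phil g hl vl h

theorem phil_of_le {g hl vl h : ℝ} (h_le : h ≤ hl) :
    phil g hl vl h = vl + 2 * Real.sqrt (g * hl) - 2 * Real.sqrt (g * h) :=
  if_pos h_le

theorem Real.sqrt_mul_sq_div_self {g w : ℝ} (hg : g ≠ 0) (hw : 0 ≤ w) :
    Real.sqrt (g * (w ^ 2 / g)) = w := by
  rw [mul_div_cancel₀ _ hg, Real.sqrt_sq hw]

theorem Real.sq_div_le_of_le_sqrt_mul {g h w : ℝ} (hg : 0 < g) (hw : 0 < w)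
    (hle : w ≤ Real.sqrt (g * h)) : w ^ 2 / g ≤ h := by
  rw [div_le_iff₀' hg]
  exact (Real.le_sqrt' hw).mp hle

theorem phil_rarefaction_meets_lower_critical_general (g hl vl : ℝ) (hg : 0 < g)
    (hv₁ : -2 * Real.sqrt (g * hl) < vl) (hv₂ : vl ≤ -Real.sqrt (g * hl)) :
    0 < (vl + 2 * Real.sqrt (g * hl)) ^ 2 / g ∧
    (vl + 2 * Real.sqrt (g * hl)) ^ 2 / g ≤ hl ∧
    phil g hl vl ((vl + 2 * Real.sqrt (g * hl)) ^ 2 / g) =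
      vl + 2 * Real.sqrt (g * hl) -
        2 * Real.sqrt (g * ((vl + 2 * Real.sqrt (g * hl)) ^ 2 / g)) ∧
    vl + 2 * Real.sqrt (g * hl) -
        2 * Real.sqrt (g * ((vl + 2 * Real.sqrt (g * hl)) ^ 2 / g)) =
      -Real.sqrt (g * ((vl + 2 * Real.sqrt (g * hl)) ^ 2 / g)) := by
  set w := vl + 2 * Real.sqrt (g * hl)
  have hw_pos : 0 < w := by linarith
  have hw_le : w ≤ Real.sqrt (g * hl) := by linarith
  have hle := Real.sq_div_le_of_le_sqrt_mul hg hw_pos hw_le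
  refine ⟨by positivity, hle, phil_of_le hle, ?_⟩
  rw [Real.sqrt_mul_sq_div_self hg.ne' hw_pos.le]
  ring

/-- If `−2√(g h_l) < v_l ≤ −√(g h_l)`, then `h⁻ = (v_l + 2√(g h_l))²/g` lies in
`(0, h_l]` and the rarefaction part of the Lax curve meets the lower critical
curve there. -/
theorem phil_rarefaction_meets_lower_critical (g hl vl : ℝ) (hg : 0 < g) (hhl : 0 < hl)
    (hv₁ : -2 * Real.sqrt (g * hl) < vl) (hv₂ : vl ≤ -Real.sqrt (g * hl)) :
    0 < (vl + 2 * Real.sqrt (g * hl)) ^ 2 / g ∧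
    (vl + 2 * Real.sqrt (g * hl)) ^ 2 / g ≤ hl ∧
    phil g hl vl ((vl + 2 * Real.sqrt (g * hl)) ^ 2 / g) =
      vl + 2 * Real.sqrt (g * hl) -
        2 * Real.sqrt (g * ((vl + 2 * Real.sqrt (g * hl)) ^ 2 / g)) ∧
    vl + 2 * Real.sqrt (g * hl) -
        2 * Real.sqrt (g * ((vl + 2 * Real.sqrt (g * hl)) ^ 2 / g)) =
      -Real.sqrt (g * ((vl + 2 * Real.sqrt (g * hl)) ^ 2 / g)) :=
  phil_rarefaction_meets_lower_critical_general g hl vl hg hv₁ hv₂
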